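/- Every L²♮-convex polyhedron P ⊆ ℝ^n can be represented as P = Q + C, where Q is a bounded L²♮-convex polyhedron, C is an L²♮-convex cone, and Q + C denotes the Minkowski sum. -/

import Mathlib

open Set Pointwise

noncomputable section

/-- Embedding of integer vectors into real vectors. -/
def coeZ {n : ℕ} (z : Fin n → ℤ) : Fin n → ℝ := fun i => (z i : ℝ)

/-- A (nonempty) polyhedron: solution set of a finite system of linear inequalities. -/
def IsPolyhedron {n : ℕ} (P : Set (Fin n → ℝ)) : Prop :=
  P.Nonempty ∧ ∃ (m : ℕ) (A : Matrix (Fin m) (Fin n) ℝ) (b : Fin m → ℝ),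
    P = {x | A.mulVec x ≤ b}

/-- The integer points of a set `P ⊆ ℝ^n`. -/
def intPts {n : ℕ} (P : Set (Fin n → ℝ)) : Set (Fin n → ℝ) :=
  {x ∈ P | ∀ i, ∃ z : ℤ, x i = (z : ℝ)}

/-- The box `{x : l ≤ x ≤ u}` with integral bounds. -/
def intBox {n : ℕ} (l u : Fin n → ℤ) : Set (Fin n → ℝ) :=
  {x | ∀ i, (l i : ℝ) ≤ x i ∧ x i ≤ (u i : ℝ)}

/-- A set `P ⊆ ℝ^n` is box-integer if its intersection with every integral box,
whenever nonempty, equals the convex hull of its integer points. -/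
def IsBoxInteger {n : ℕ} (P : Set (Fin n → ℝ)) : Prop :=
  ∀ l u : Fin n → ℤ, l ≤ u → (P ∩ intBox l u).Nonempty →
    P ∩ intBox l u = convexHull ℝ (intPts (P ∩ intBox l u))

/-- A set closed under multiplication by nonnegative scalars. -/
def IsConeSet {n : ℕ} (C : Set (Fin n → ℝ)) : Prop :=
  ∀ x ∈ C, ∀ lam : ℝ, 0 ≤ lam → lam • x ∈ C

/-- The characteristic (recession) cone of `P`. -/
def charCone {n : ℕ} (P : Set (Fin n → ℝ)) : Set (Fin n → ℝ) :=
  {d | ∀ x ∈ P, x + d ∈ P}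

/-- The integral neighborhood `N(x)` of a real vector `x`. -/
def intNbhd {n : ℕ} (x : Fin n → ℝ) : Set (Fin n → ℤ) :=
  {z | ∀ i, |x i - (z i : ℝ)| < 1}

/-- The convex hull (in `ℝ^n`) of a set of integer vectors. -/
def convZ {n : ℕ} (S : Set (Fin n → ℤ)) : Set (Fin n → ℝ) :=
  convexHull ℝ (coeZ '' S)

/-- A nonempty set `S ⊆ ℤ^n` is integrally convex if every point `x` of its convex hull
belongs to the convex hull of `S ∩ N(x)`. -/
def IntegrallyConvex {n : ℕ} (S : Set (Fin n → ℤ)) : Prop :=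
  S.Nonempty ∧ ∀ x ∈ convZ S, x ∈ convZ (S ∩ intNbhd x)

/-- An L♮-convex polyhedron, given by its standard inequality description. -/
def IsLNatPolyhedron {n : ℕ} (P : Set (Fin n → ℝ)) : Prop :=
  P.Nonempty ∧ ∃ (I J : Set (Fin n)) (E : Set (Fin n × Fin n))
    (l u : Fin n → ℤ) (dd : Fin n × Fin n → ℤ),
    P = {x | (∀ i ∈ I, (l i : ℝ) ≤ x i) ∧ (∀ j ∈ J, x j ≤ (u j : ℝ)) ∧
             (∀ p ∈ E, x p.2 - x p.1 ≤ (dd p : ℝ))}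

/-- An L²♮-convex polyhedron: the Minkowski sum of two L♮-convex polyhedra. -/
def IsL2NatPolyhedron {n : ℕ} (P : Set (Fin n → ℝ)) : Prop :=
  ∃ P₁ P₂ : Set (Fin n → ℝ), IsLNatPolyhedron P₁ ∧ IsLNatPolyhedron P₂ ∧ P = P₁ + P₂

/-- An M♮-convex set of integer vectors (exchange axiom). -/
def IsMNatSet {n : ℕ} (S : Set (Fin n → ℤ)) : Prop :=
  S.Nonempty ∧ ∀ x ∈ S, ∀ y ∈ S, ∀ i : Fin n, y i < x i →
    ((x - Pi.single i 1 ∈ S ∧ y + Pi.single i 1 ∈ S) ∨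
     ∃ j : Fin n, x j < y j ∧ x - Pi.single i 1 + Pi.single j 1 ∈ S ∧
       y + Pi.single i 1 - Pi.single j 1 ∈ S)

/-- An M♮-convex polyhedron: the convex hull of an M♮-convex set. -/
def IsMNatPolyhedron {n : ℕ} (P : Set (Fin n → ℝ)) : Prop :=
  ∃ S : Set (Fin n → ℤ), IsMNatSet S ∧ P = convZ S

/-- An L♮-convex set of integer vectors (closed under componentwise
rounded-up and rounded-down midpoints). -/
def IsLNatSet {n : ℕ} (S : Set (Fin n → ℤ)) : Prop :=
  S.Nonempty ∧ ∀ x ∈ S, ∀ y ∈ S,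
    (fun i => ⌈(x i + y i : ℚ) / 2⌉) ∈ S ∧ (fun i => ⌊(x i + y i : ℚ) / 2⌋) ∈ S

/-- An L²♮-convex set: the Minkowski sum of two L♮-convex sets. -/
def IsL2NatSet {n : ℕ} (S : Set (Fin n → ℤ)) : Prop :=
  ∃ S₁ S₂ : Set (Fin n → ℤ), IsLNatSet S₁ ∧ IsLNatSet S₂ ∧ S = S₁ + S₂

open Finset in
private lemma compress {n : ℕ} (I J : Set (Fin n)) (E : Set (Fin n × Fin n))
    (l u : Fin n → ℝ) (dd : Fin n × Fin n → ℝ) (W T : ℝ)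
    (hW : 1 ≤ W) (hl : ∀ i ∈ I, |l i| ≤ W - 1) (hu : ∀ j ∈ J, |u j| ≤ W - 1)
    (hd : ∀ p ∈ E, |dd p| ≤ W - 1) (hT : (n + 2) * W ≤ T) :
    ∀ x : Fin n → ℝ, (∀ i ∈ I, l i ≤ x i) → (∀ j ∈ J, x j ≤ u j) →
      (∀ p ∈ E, x p.2 - x p.1 ≤ dd p) →
    ∃ q : Fin n → ℝ, (∀ i ∈ I, l i ≤ q i) ∧ (∀ j ∈ J, q j ≤ u j) ∧
      (∀ p ∈ E, q p.2 - q p.1 ≤ dd p) ∧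
      (∀ i ∈ I, 0 ≤ x i - q i) ∧ (∀ j ∈ J, x j - q j ≤ 0) ∧
      (∀ p ∈ E, (x p.2 - q p.2) - (x p.1 - q p.1) ≤ 0) ∧
      (∀ i, q i ≤ T) ∧ (∀ i, q i ≤ x i) ∧ (∀ i, min (x i) 0 ≤ q i) := by
  have hW0 : 0 < W := by linarith
  suffices H : ∀ N : ℕ, ∀ x : Fin n → ℝ, (∑ i, (⌈x i - T⌉).toNat) ≤ N →
      (∀ i ∈ I, l i ≤ x i) → (∀ j ∈ J, x j ≤ u j) →
      (∀ p ∈ E, x p.2 - x p.1 ≤ dd p) →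
      ∃ q : Fin n → ℝ, (∀ i ∈ I, l i ≤ q i) ∧ (∀ j ∈ J, q j ≤ u j) ∧
        (∀ p ∈ E, q p.2 - q p.1 ≤ dd p) ∧
        (∀ i ∈ I, 0 ≤ x i - q i) ∧ (∀ j ∈ J, x j - q j ≤ 0) ∧
        (∀ p ∈ E, (x p.2 - q p.2) - (x p.1 - q p.1) ≤ 0) ∧
        (∀ i, q i ≤ T) ∧ (∀ i, q i ≤ x i) ∧ (∀ i, min (x i) 0 ≤ q i) by
    exact fun x => H _ x le_rfl
  intro N
  induction N with
  | zero =>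
    intro x hμ h1 h2 h3
    have hxT : ∀ i, x i ≤ T := by
      intro i
      have h00 : (⌈x i - T⌉).toNat = 0 :=
        Finset.sum_eq_zero_iff.mp (Nat.le_zero.mp hμ) i (Finset.mem_univ i)
      have h0 : ⌈x i - T⌉ ≤ 0 := by omega
      have h0' : x i - T ≤ (0 : ℤ) := Int.ceil_le.mp h0
      have : x i - T ≤ (0 : ℝ) := by exact_mod_cast h0'
      linarith
    refine ⟨x, h1, h2, h3, ?_, ?_, ?_, hxT, fun i => le_rfl, fun i => min_le_left _ _⟩
    · intro i _; simp
    · intro j _; simp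
    · intro p _; simp
  | succ N ih =>
    intro x hμ h1 h2 h3
    by_cases hmax : ∀ i, x i ≤ T
    · refine ⟨x, h1, h2, h3, ?_, ?_, ?_, hmax, fun i => le_rfl, fun i => min_le_left _ _⟩
      · intro i _; simp
      · intro j _; simp
      · intro p _; simp
    push_neg at hmax
    obtain ⟨i₀, hi₀⟩ := hmax
    -- pigeonhole: find an empty window (k*W, k*W + W]
    have hwin : ∃ k : ℕ, k ≤ n ∧ ∀ i, ¬((k : ℝ) * W < x i ∧ x i ≤ (k : ℝ) * W + W) := by
      by_contra hcon
      push_neg at hcon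
      have hfull : ∀ k : ℕ, ∃ i : Fin n, k ≤ n →
          (k : ℝ) * W < x i ∧ x i ≤ (k : ℝ) * W + W := by
        intro k
        by_cases hk : k ≤ n
        · obtain ⟨i, hi1, hi2⟩ := hcon k hk
          exact ⟨i, fun _ => ⟨hi1, hi2⟩⟩
        · exact ⟨i₀, fun h => absurd h hk⟩
      choose f hf using hfull
      have hcard : (Finset.univ : Finset (Fin n)).card < (Finset.range (n + 1)).card := by
        simpa using Nat.lt_succ_self n
      obtain ⟨a, ha, b, hb, hab, hfab⟩ :=
        Finset.exists_ne_map_eq_of_card_lt_of_maps_to hcard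
          (fun k (_ : k ∈ Finset.range (n+1)) => Finset.mem_univ (f k))
      replace ha := Nat.lt_succ_iff.mp (Finset.mem_range.mp ha)
      replace hb := Nat.lt_succ_iff.mp (Finset.mem_range.mp hb)
      rcases Nat.lt_or_ge a b with hlt | hge
      · have h1' := (hf a ha).2
        have h2' := (hf b hb).1
        rw [hfab] at h1'
        have : ((a : ℝ) + 1) * W ≤ (b : ℝ) * W := by
          apply mul_le_mul_of_nonneg_right _ hW0.le
          have : (a : ℝ) + 1 ≤ b := by exact_mod_cast Nat.succ_le_of_lt hlt
          exact this
        nlinarith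
      · have hlt : b < a := lt_of_le_of_ne hge (fun h => hab h.symm)
        have h1' := (hf b hb).2
        have h2' := (hf a ha).1
        rw [hfab] at h2'
        have : ((b : ℝ) + 1) * W ≤ (a : ℝ) * W := by
          apply mul_le_mul_of_nonneg_right _ hW0.le
          have : (b : ℝ) + 1 ≤ a := by exact_mod_cast Nat.succ_le_of_lt hlt
          exact this
        nlinarith
    obtain ⟨k, hkn, hk⟩ := hwin
    set t : ℝ := (k : ℝ) * W with ht
    have ht0 : 0 ≤ t := mul_nonneg (Nat.cast_nonneg k) hW0.le
    have htT : t + 2 * W ≤ T := by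
      have : (k : ℝ) ≤ n := Nat.cast_le.mpr hkn
      nlinarith
    -- gap facts
    have hgap : ∀ i, x i ≤ t + W → x i ≤ t := by
      intro i hi
      by_contra hcon
      exact hk i ⟨lt_of_not_ge hcon, hi⟩
    have hprop : ∀ p ∈ E, t + W < x p.2 → t + W < x p.1 := by
      intro p hp h2p
      have hdp := hd p hp
      have h3p := h3 p hp
      have h1p : t < x p.1 := by
        have : |dd p| ≤ W - 1 := hdp
        have := abs_le.mp this
        linarith
      by_contra hcon
      have := hgap p.1 (le_of_not_gt (fun hgt => hcon hgt))
      linarith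
    classical
    set x' : Fin n → ℝ := fun i => if t + W < x i then x i - 1 else x i with hx'
    have hx'le : ∀ i, x' i ≤ x i := by
      intro i; simp only [hx']; split <;> linarith
    have hx'lo : ∀ i, min (x i) 0 ≤ x' i := by
      intro i; simp only [hx']; split
      · have : 0 ≤ x i - 1 := by linarith
        exact le_trans (min_le_right _ _) this
      · exact min_le_left _ _
    -- x' is feasible
    have h1' : ∀ i ∈ I, l i ≤ x' i := by
      intro i hi
      simp only [hx']; split
      · have := abs_le.mp (hl i hi); linarith
      · exact h1 i hi
    have h2' : ∀ j ∈ J, x' j ≤ u j := fun j hj => le_trans (hx'le j) (h2 j hj)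
    have hJout : ∀ j ∈ J, ¬ (t + W < x j) := by
      intro j hj hcon
      have := abs_le.mp (hu j hj)
      have := h2 j hj
      linarith
    have h3' : ∀ p ∈ E, x' p.2 - x' p.1 ≤ dd p := by
      intro p hp
      have hdp := abs_le.mp (hd p hp)
      have h3p := h3 p hp
      simp only [hx']
      by_cases c2 : t + W < x p.2
      · have c1 : t + W < x p.1 := hprop p hp c2
        rw [if_pos c2, if_pos c1]; linarith
      · rw [if_neg c2]
        by_cases c1 : t + W < x p.1
        · rw [if_pos c1]
          have : x p.2 ≤ t := hgap p.2 (le_of_not_gt c2)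
          linarith
        · rw [if_neg c1]; exact h3p
    -- cone conditions of the step x - x'
    have hc1 : ∀ i, 0 ≤ x i - x' i := by
      intro i; simp only [hx']; split <;> linarith
    have hc2 : ∀ j ∈ J, x j - x' j ≤ 0 := by
      intro j hj
      simp only [hx', if_neg (hJout j hj)]; linarith
    have hc3 : ∀ p ∈ E, (x p.2 - x' p.2) - (x p.1 - x' p.1) ≤ 0 := by
      intro p hp
      simp only [hx']
      by_cases c2 : t + W < x p.2
      · rw [if_pos c2, if_pos (hprop p hp c2)]; ring_nf; linarith
      · rw [if_neg c2]
        by_cases c1 : t + W < x p.1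
        · rw [if_pos c1]; linarith
        · rw [if_neg c1]; linarith
    -- measure decrease
    have hμ' : (∑ i, (⌈x' i - T⌉).toNat) ≤ N := by
      have hlt : (∑ i, (⌈x' i - T⌉).toNat) < ∑ i, (⌈x i - T⌉).toNat := by
        apply Finset.sum_lt_sum
        · intro i _
          have : x' i ≤ x i := hx'le i
          exact Int.toNat_le_toNat (Int.ceil_le_ceil (by linarith))
        · refine ⟨i₀, Finset.mem_univ i₀, ?_⟩
          have hi₀H : t + W < x i₀ := by linarith
          have hx'i₀ : x' i₀ = x i₀ - 1 := by simp only [hx', if_pos hi₀H]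
          have hpos : 0 < ⌈x i₀ - T⌉ := Int.ceil_pos.mpr (by linarith)
          have hceil : ⌈x' i₀ - T⌉ = ⌈x i₀ - T⌉ - 1 := by
            rw [hx'i₀]
            rw [show x i₀ - 1 - T = x i₀ - T + (-1 : ℤ) by push_cast; ring]
            rw [Int.ceil_add_intCast]; ring
          rw [hceil]
          omega
      omega
    obtain ⟨q, g1, g2, g3, g4, g5, g6, g7, g8, g9⟩ := ih x' hμ' h1' h2' h3'
    refine ⟨q, g1, g2, g3, ?_, ?_, ?_, g7, ?_, ?_⟩
    · intro i hi
      have := g4 i hi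
      have := hc1 i
      linarith
    · intro j hj
      have := g5 j hj
      have := hc2 j hj
      linarith
    · intro p hp
      have := g6 p hp
      have := hc3 p hp
      linarith
    · intro i
      exact le_trans (g8 i) (hx'le i)
    · intro i
      have hg := g9 i
      rcases le_total (x' i) 0 with h | h
      · rw [min_eq_left h] at hg
        exact le_trans (hx'lo i) hg
      · rw [min_eq_right h] at hg
        exact le_trans (min_le_right _ _) hg

lemma lnat_decomp {n : ℕ} (P : Set (Fin n → ℝ)) (hP : IsLNatPolyhedron P) :
    ∃ Q C : Set (Fin n → ℝ), IsLNatPolyhedron Q ∧ Bornology.IsBounded Q ∧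
      IsLNatPolyhedron C ∧ IsConeSet C ∧ P = Q + C := by
  classical
  obtain ⟨⟨x₀, hx₀⟩, I, J, E, l, u, dd, hPeq⟩ := hP
  set W : ℤ := 1 + ∑ i, |l i| + ∑ i, |u i| + ∑ p, |dd p| with hWdef
  have sl : (0:ℤ) ≤ ∑ i, |l i| := Finset.sum_nonneg fun i _ => abs_nonneg _
  have su : (0:ℤ) ≤ ∑ i, |u i| := Finset.sum_nonneg fun i _ => abs_nonneg _
  have sd : (0:ℤ) ≤ ∑ p, |dd p| := Finset.sum_nonneg fun p _ => abs_nonneg _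
  have hW1 : (1:ℤ) ≤ W := by simp only [hWdef]; linarith
  have hlW : ∀ i, |l i| ≤ W - 1 := by
    intro i
    have := Finset.single_le_sum (fun j (_ : j ∈ Finset.univ) => abs_nonneg (l j))
      (Finset.mem_univ i)
    simp only [hWdef]; linarith
  have huW : ∀ j, |u j| ≤ W - 1 := by
    intro j
    have := Finset.single_le_sum (fun i (_ : i ∈ Finset.univ) => abs_nonneg (u i))
      (Finset.mem_univ j)
    simp only [hWdef]; linarith
  have hdW : ∀ p, |dd p| ≤ W - 1 := by
    intro p
    have := Finset.single_le_sum (fun q (_ : q ∈ Finset.univ) => abs_nonneg (dd q))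
      (Finset.mem_univ p)
    simp only [hWdef]; linarith
  set T : ℤ := (n + 2) * W with hTdef
  have hT0 : (0:ℤ) ≤ T := by
    have : (0:ℤ) ≤ (n:ℤ) + 2 := by positivity
    exact mul_nonneg this (by linarith)
  -- real versions
  have hWR : (1:ℝ) ≤ (W:ℝ) := by exact_mod_cast hW1
  have hlR : ∀ i ∈ I, |((l i : ℤ):ℝ)| ≤ (W:ℝ) - 1 := by
    intro i _; have := hlW i
    rw [← Int.cast_abs]; exact_mod_cast this
  have huR : ∀ j ∈ J, |((u j : ℤ):ℝ)| ≤ (W:ℝ) - 1 := by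
    intro j _; have := huW j
    rw [← Int.cast_abs]; exact_mod_cast this
  have hdR : ∀ p, |((dd p : ℤ):ℝ)| ≤ (W:ℝ) - 1 := by
    intro p; have := hdW p
    rw [← Int.cast_abs]; exact_mod_cast this
  have hTR : ((n:ℝ) + 2) * (W:ℝ) ≤ (T:ℝ) := by
    rw [hTdef]; push_cast; ring_nf; exact le_rfl
  have hTR0 : (0:ℝ) ≤ (T:ℝ) := by exact_mod_cast hT0
  -- key compression: every point of P decomposes
  have key : ∀ x : Fin n → ℝ,
      (∀ i ∈ I, (l i:ℝ) ≤ x i) → (∀ j ∈ J, x j ≤ (u j:ℝ)) →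
      (∀ p ∈ E, x p.2 - x p.1 ≤ (dd p:ℝ)) →
      ∃ r : Fin n → ℝ, (∀ i ∈ I, (l i:ℝ) ≤ r i) ∧ (∀ j ∈ J, r j ≤ (u j:ℝ)) ∧
        (∀ p ∈ E, r p.2 - r p.1 ≤ (dd p:ℝ)) ∧ (∀ i, -(T:ℝ) ≤ r i) ∧ (∀ i, r i ≤ (T:ℝ)) ∧
        (∀ i ∈ I, 0 ≤ x i - r i) ∧ (∀ j ∈ J, x j - r j ≤ 0) ∧
        (∀ p ∈ E, (x p.2 - r p.2) - (x p.1 - r p.1) ≤ 0) := by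
    intro x p1 p2 p3
    obtain ⟨q, a1, a2, a3, a4, a5, a6, a7, a8, a9⟩ :=
      compress I J E (fun i => (l i : ℝ)) (fun j => (u j : ℝ)) (fun p => (dd p : ℝ))
        (W:ℝ) (T:ℝ) hWR hlR huR (fun p _ => hdR p) hTR x p1 p2 p3
    obtain ⟨q', b1, b2, b3, b4, b5, b6, b7, b8, b9⟩ :=
      compress J I (Prod.swap ⁻¹' E) (fun j => -(u j : ℝ)) (fun i => -(l i : ℝ))
        (fun p => (dd p.swap : ℝ)) (W:ℝ) (T:ℝ) hWR
        (fun j hj => by rw [abs_neg]; exact huR j hj)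
        (fun i hi => by rw [abs_neg]; exact hlR i hi)
        (fun p _ => hdR p.swap) hTR (fun i => - q i)
        (fun j hj => by simpa using neg_le_neg (a2 j hj))
        (fun i hi => by simpa using neg_le_neg (a1 i hi))
        (fun p hp => by
          have h := a3 p.swap hp
          simp only [Prod.fst_swap, Prod.snd_swap] at h
          linarith)
    refine ⟨fun i => - q' i, ?_, ?_, ?_, ?_, ?_, ?_, ?_, ?_⟩
    · intro i hi
      have h := b2 i hi
      dsimp only; linarith
    · intro j hj
      have h := b1 j hj
      dsimp only; linarith
    · intro p hp
      have h := b3 p.swap (by simpa using hp)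
      simp only [Prod.fst_swap, Prod.snd_swap, Prod.swap_swap] at h
      dsimp only; linarith
    · intro i
      have h := b7 i
      dsimp only; linarith
    · intro i
      have h9 := b9 i
      dsimp only
      rcases le_total (q i) 0 with h | h
      · have hm : min (-q i) 0 = 0 := min_eq_right (by linarith)
        rw [hm] at h9
        linarith
      · have hm : min (-q i) 0 = -q i := min_eq_left (by linarith)
        rw [hm] at h9
        have := a7 i
        linarith
    · intro i hi
      have h1 := a4 i hi
      have h2 := b5 i hi
      dsimp only at h2 ⊢; linarith
    · intro j hj
      have h1 := a5 j hj
      have h2 := b4 j hj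
      dsimp only at h2 ⊢; linarith
    · intro p hp
      have h1 := a6 p hp
      have h2 := b6 p.swap (by simpa using hp)
      simp only [Prod.fst_swap, Prod.snd_swap] at h2
      dsimp only at h2 ⊢; linarith
  -- Q and C
  set lQ : Fin n → ℤ := fun i => if i ∈ I then max (l i) (-T) else -T with hlQ
  set uQ : Fin n → ℤ := fun j => if j ∈ J then min (u j) T else T with huQ
  set Q : Set (Fin n → ℝ) := {x | (∀ i, (lQ i : ℝ) ≤ x i) ∧ (∀ j, x j ≤ (uQ j : ℝ)) ∧
      (∀ p ∈ E, x p.2 - x p.1 ≤ (dd p : ℝ))} with hQdef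
  set C : Set (Fin n → ℝ) := {c | (∀ i ∈ I, (0:ℝ) ≤ c i) ∧ (∀ j ∈ J, c j ≤ 0) ∧
      (∀ p ∈ E, c p.2 - c p.1 ≤ 0)} with hCdef
  have hlQle : ∀ i, -(T:ℝ) ≤ (lQ i : ℝ) := by
    intro i
    simp only [hlQ]
    split
    · rw [← Int.cast_neg]; exact_mod_cast le_max_right _ _
    · rw [← Int.cast_neg]
  have huQle : ∀ j, ((uQ j : ℤ):ℝ) ≤ (T:ℝ) := by
    intro j
    simp only [huQ]
    split
    · exact_mod_cast min_le_right _ _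
    · exact le_rfl
  have memQ : ∀ x : Fin n → ℝ,
      ((∀ i ∈ I, (l i:ℝ) ≤ x i) ∧ (∀ j ∈ J, x j ≤ (u j:ℝ)) ∧
        (∀ p ∈ E, x p.2 - x p.1 ≤ (dd p:ℝ)) ∧ (∀ i, -(T:ℝ) ≤ x i) ∧ (∀ i, x i ≤ (T:ℝ)))
      → x ∈ Q := by
    intro x ⟨c1, c2, c3, c4, c5⟩
    refine ⟨?_, ?_, c3⟩
    · intro i
      simp only [hlQ]
      split
      · next hi =>
        rw [Int.cast_max]
        apply max_le (c1 i hi)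
        rw [Int.cast_neg]; exact c4 i
      · rw [Int.cast_neg]; exact c4 i
    · intro j
      simp only [huQ]
      split
      · next hj =>
        rw [Int.cast_min]
        exact le_min (c2 j hj) (c5 j)
      · exact c5 j
  refine ⟨Q, C, ⟨?_, ?_⟩, ?_, ⟨⟨0, ?_, ?_, ?_⟩, ?_⟩, ?_, ?_⟩
  · -- Q nonempty
    rw [hPeq] at hx₀
    obtain ⟨r, r1, r2, r3, r4, r5, -⟩ := key x₀ hx₀.1 hx₀.2.1 hx₀.2.2
    exact ⟨r, memQ r ⟨r1, r2, r3, r4, r5⟩⟩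
  · -- Q has L-natural form
    refine ⟨Set.univ, Set.univ, E, lQ, uQ, dd, ?_⟩
    ext x
    constructor
    · rintro ⟨h1, h2, h3⟩; exact ⟨fun i _ => h1 i, fun j _ => h2 j, h3⟩
    · rintro ⟨h1, h2, h3⟩; exact ⟨fun i => h1 i trivial, fun j => h2 j trivial, h3⟩
  · -- Q bounded
    apply (Metric.isBounded_closedBall (x := (0 : Fin n → ℝ)) (r := (T:ℝ))).subset
    rintro x ⟨h1, h2, -⟩
    rw [Metric.mem_closedBall, dist_pi_le_iff hTR0]
    intro i
    rw [Real.dist_eq, Pi.zero_apply, sub_zero, abs_le]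
    exact ⟨le_trans (hlQle i) (h1 i), le_trans (h2 i) (huQle i)⟩
  · intro i _; simp
  · intro j _; simp
  · intro p _; simp
  · -- C has L-natural form
    refine ⟨I, J, E, 0, 0, 0, ?_⟩
    ext c
    simp [hCdef]
  · -- C is a cone
    rintro c ⟨c1, c2, c3⟩ lam hlam
    refine ⟨?_, ?_, ?_⟩
    · intro i hi
      simpa using mul_nonneg hlam (c1 i hi)
    · intro j hj
      simpa using mul_nonpos_of_nonneg_of_nonpos hlam (c2 j hj)
    · intro p hp
      have := c3 p hp
      simp only [Pi.smul_apply, smul_eq_mul]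
      nlinarith
  · -- P = Q + C
    ext x
    rw [hPeq]
    constructor
    · rintro ⟨h1, h2, h3⟩
      obtain ⟨r, r1, r2, r3, r4, r5, r6, r7, r8⟩ := key x h1 h2 h3
      refine Set.mem_add.mpr ⟨r, memQ r ⟨r1, r2, r3, r4, r5⟩, fun i => x i - r i,
        ⟨r6, r7, fun p hp => by simpa using r8 p hp⟩, ?_⟩
      funext i; simp
    · intro hx
      obtain ⟨q, hq, c, hc, hqc⟩ := Set.mem_add.mp hx
      obtain ⟨q1, q2, q3⟩ := hq
      obtain ⟨c1, c2, c3⟩ := hc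
      subst hqc
      refine ⟨?_, ?_, ?_⟩
      · intro i hi
        have h1 := q1 i
        have h2 := c1 i hi
        have h3 : (l i : ℝ) ≤ (lQ i : ℝ) := by
          simp only [hlQ, if_pos hi]
          exact_mod_cast le_max_left _ _
        simp only [Pi.add_apply]
        linarith
      · intro j hj
        have h1 := q2 j
        have h2 := c2 j hj
        have h3 : ((uQ j : ℤ):ℝ) ≤ (u j : ℝ) := by
          simp only [huQ, if_pos hj]
          exact_mod_cast min_le_left _ _
        simp only [Pi.add_apply]
        linarith
      · intro p hp
        have h1 := q3 p hp
        have h2 := c3 p hp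
        simp only [Pi.add_apply]
        linarith

private lemma sum_cone {n : ℕ} {C₁ C₂ : Set (Fin n → ℝ)} (h1 : IsConeSet C₁)
    (h2 : IsConeSet C₂) : IsConeSet (C₁ + C₂) := by
  rintro x hx lam hlam
  obtain ⟨a, ha, b, hb, rfl⟩ := Set.mem_add.mp hx
  exact Set.mem_add.mpr ⟨lam • a, h1 a ha lam hlam, lam • b, h2 b hb lam hlam,
    (smul_add lam a b).symm⟩

/-- Every L²♮-convex polyhedron `P ⊆ ℝ^n` decomposes as `P = Q + C` with a
bounded L²♮-convex polyhedron `Q` and an L²♮-convex cone `C`. -/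
theorem l2natPolyhedron_decomposition {n : ℕ} (P : Set (Fin n → ℝ))
    (hP : IsL2NatPolyhedron P) :
    ∃ Q C : Set (Fin n → ℝ),
      IsL2NatPolyhedron Q ∧ Bornology.IsBounded Q ∧
      IsL2NatPolyhedron C ∧ IsConeSet C ∧
      P = Q + C := by
  obtain ⟨P₁, P₂, h1, h2, hP12⟩ := hP
  obtain ⟨Q₁, C₁, hQ1, hb1, hC1, hcone1, he1⟩ := lnat_decomp P₁ h1
  obtain ⟨Q₂, C₂, hQ2, hb2, hC2, hcone2, he2⟩ := lnat_decomp P₂ h2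
  refine ⟨Q₁ + Q₂, C₁ + C₂, ⟨Q₁, Q₂, hQ1, hQ2, rfl⟩, hb1.add hb2,
    ⟨C₁, C₂, hC1, hC2, rfl⟩, sum_cone hcone1 hcone2, ?_⟩
  rw [hP12, he1, he2, add_add_add_comm]
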